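/- For every integer r, define the r-shifted q-rational {x - r} by the recursion {x - r} = q^{-2}({x - r + 1} - 1) (equivalently {y+1} = q²{y}+1), starting from given X = {x}. Let δ := {x} - {x-1} be nonzero and ν satisfy ν² = δ^{-1}. Then substituting a = q·ν·δ into (a·q^{-r} - a^{-1}·q^{r})/(q - q^{-1}) yields q^{r}·ν·{x - r}. -/

import Mathlib

/-
Put `δ := f 0 - f (-1)` and `c := q²`. The affine recursion `f (y + 1) = c f y + 1` becomes geometric
after the shift `g y := (c - 1) f y + 1`, i.e. `g (y + 1) = c g y`, so `g y = c ^ (y + 1) δ` for every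
integer `y`. On the other side `ν² = δ⁻¹` gives `a⁻¹ = q⁻¹ ν`, and the claimed identity becomes
`q^{1-r} δ - q^{r-1} = q^{r-1} (q² - 1) f (-r)`, which is the closed form at `y = -r`.
-/

theorem eq_mul_zpow_of_succ_eq_mul {G₀ : Type*} [GroupWithZero G₀] {c : G₀} (hc : c ≠ 0)
    {g : ℤ → G₀} (hg : ∀ y, g (y + 1) = g y * c) (y : ℤ) : g y = g 0 * c ^ y := by
  induction y with
  | zero => rw [zpow_zero, mul_one]
  | succ i ih => rw [hg, ih, mul_assoc, zpow_add_one₀ hc]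
  | pred i ih =>
    have hstep := hg (-i - 1)
    rw [sub_add_cancel, ih] at hstep
    rw [zpow_sub_one₀ hc, ← mul_assoc, hstep, mul_inv_cancel_right₀ hc]

theorem sub_one_mul_add_one_eq_zpow_of_succ_eq_mul_add_one {K : Type*} [Field K] {c : K}
    (hc : c ≠ 0) {f : ℤ → K} (hf : ∀ y, f (y + 1) = c * f y + 1) (y : ℤ) :
    (c - 1) * f y + 1 = c ^ (y + 1) * (f 0 - f (-1)) := by
  have hgeom := eq_mul_zpow_of_succ_eq_mul hc (g := fun y ↦ (c - 1) * f y + 1)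
    (fun y ↦ by rw [hf]; ring) y
  have hf0 : f 0 = c * f (-1) + 1 := by simpa using hf (-1)
  rw [hgeom, zpow_add_one₀ hc, hf0]
  ring

theorem inv_mul_mul_eq_of_sq_eq_inv {K : Type*} [Field K] (q : K) {ν δ : K} (hν : ν ^ 2 = δ⁻¹) :
    (q * ν * δ)⁻¹ = q⁻¹ * ν := by
  rw [mul_inv, mul_inv, ← hν, pow_two, mul_assoc q⁻¹, ← mul_assoc ν⁻¹, inv_mul_mul_self]

theorem formula_qbin_general {K : Type*} [Field K] (q ν : K) (f : ℤ → K)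
    (hq : q ≠ 0) (hqq : q - q⁻¹ ≠ 0)
    (hrec : ∀ y : ℤ, f (y + 1) = q ^ 2 * f y + 1)
    (hν : ν ^ 2 = (f 0 - f (-1))⁻¹) :
    ∀ r : ℤ,
      let a := q * ν * (f 0 - f (-1))
      (a * q ^ (-r) - a⁻¹ * q ^ r) / (q - q⁻¹) = q ^ r * ν * f (-r) := by
  intro r a
  have hclosed := sub_one_mul_add_one_eq_zpow_of_succ_eq_mul_add_one (pow_ne_zero 2 hq) hrec (-r)
  have hpow : (q ^ 2) ^ (-r + 1) = q ^ 2 / (q ^ r) ^ 2 := by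
    rw [zpow_add_one₀ (pow_ne_zero 2 hq), zpow_neg, ← zpow_ofNat q 2, zpow_comm, zpow_ofNat,
      zpow_ofNat, ← div_eq_inv_mul]
  rw [hpow] at hclosed
  simp only [a, inv_mul_mul_eq_of_sq_eq_inv q hν, zpow_neg, div_eq_iff hqq]
  field_simp
  field_simp at hclosed
  linear_combination -ν * hclosed

/-- Lemma 4.6 (lem:formulaqbin): with `f : ℤ → K` the shifted q-rationals
(`f 0 = {x}`, `f (y+1) = q² f y + 1`), `δ := f 0 - f (-1) ≠ 0`, `ν² = δ⁻¹`,
substituting `a = qνδ` into `(a q^{-r} - a⁻¹ q^r)/(q - q⁻¹)` yields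
`q^r · ν · f (-r)` for all `r : ℤ`. -/
theorem formula_qbin {K : Type*} [Field K] (q ν : K) (f : ℤ → K)
    (hq : q ≠ 0) (hqq : q - q⁻¹ ≠ 0)
    (hrec : ∀ y : ℤ, f (y + 1) = q ^ 2 * f y + 1)
    (hδ : f 0 - f (-1) ≠ 0) (hν : ν ^ 2 = (f 0 - f (-1))⁻¹) :
    ∀ r : ℤ,
      let a := q * ν * (f 0 - f (-1))
      (a * q ^ (-r) - a⁻¹ * q ^ r) / (q - q⁻¹) = q ^ r * ν * f (-r) :=
  formula_qbin_general q ν f hq hqq hrec hν
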